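/- arXiv:math/0506620 — 3 statements merged into one kernel-verified Lean document; each statement's English description precedes it below -/
import Mathlib

section
/- Fubini-type identity: for a nonnegative measurable function ν on (0,a), ∫₀^a (∫₀^a ν(t)/(sqrt(t)(t + x)) dt)² x dx < ∞ if and only if ∫₀^a ∫₀^a ν(t)ν(τ)·|log(t + τ)|/sqrt(tτ) dt dτ < ∞. -/
/-!
Expanding the square and integrating out `x` first (Tonelli), the left side becomes
`∫∫ f t f τ K(t, τ)` with `f t = ν t / √t` and `K(t, τ) = ∫₀^a x / ((t + x) (τ + x)) dx`, while the
right side is `∫∫ f t f τ |log (t + τ)|`. On `(0, a)²` the kernel is comparable to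
`|log (t + τ)| + 1`: it is at most `∫₀^a dx / (t + τ + x)`, and at least `1/16` (from `x ∈ (a/2, a)`)
and `½ log ((t + τ + a) / (2 (t + τ)))` (from `x > t + τ`). Hence the left side is bounded by a
multiple of the right side plus `(∫ f)²`, and the right side by a multiple of the left side.
Finally the right side already forces `∫ f < ∞`: on each half of `(0, a)` split at `1/2` we have
`|log (t + τ)| ≥ |log (τ + 1/2)|`, which vanishes only at `τ = 1/2`, so `∫ f = ∞` on either half
makes the double integral infinite.
-/

open MeasureTheory ENNReal Set

theorem lintegral_sq_mul_eq_lintegral_lintegral_lintegral {α β : Type*} [MeasurableSpace α]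
    [MeasurableSpace β] {μ : Measure α} {ν : Measure β} [SFinite μ] [SFinite ν]
    {g : α → β → ℝ≥0∞} {w : β → ℝ≥0∞} (hg : Measurable (Function.uncurry g))
    (hw : Measurable w) :
    ∫⁻ x, (∫⁻ t, g t x ∂μ) ^ 2 * w x ∂ν = ∫⁻ τ, ∫⁻ t, ∫⁻ x, g τ x * g t x * w x ∂ν ∂μ ∂μ := by
  have hg' : Measurable fun p : α × β => g p.1 p.2 := hg
  have hsq (x : β) : (∫⁻ t, g t x ∂μ) ^ 2 * w x = ∫⁻ τ, ∫⁻ t, g τ x * g t x * w x ∂μ ∂μ := by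
    have hgx : Measurable fun t => g t x := hg'.comp measurable_prodMk_right
    simp_rw [mul_assoc, lintegral_const_mul _ (hgx.mul_const _), lintegral_mul_const _ hgx, sq,
      mul_assoc]
  simp_rw [hsq]
  rw [lintegral_lintegral_swap (by fun_prop)]
  refine lintegral_congr fun τ => lintegral_lintegral_swap ?_
  fun_prop

section DoubleIntegral

variable {α : Type*} [MeasurableSpace α] {μ : Measure α} {T : Set α}

theorem setLIntegral_setLIntegral_mono_set {S : Set α} {f : α → α → ℝ≥0∞} (hTS : T ⊆ S) :
    ∫⁻ τ in T, ∫⁻ t in T, f t τ ∂μ ∂μ ≤ ∫⁻ τ in S, ∫⁻ t in S, f t τ ∂μ ∂μ :=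
  (lintegral_mono fun _ => lintegral_mono_set hTS).trans (lintegral_mono_set hTS)

theorem setLIntegral_setLIntegral_mul_le_const_mul (hT : MeasurableSet T)
    {G k k' : α → α → ℝ≥0∞} {c : ℝ≥0∞} (hc : c ≠ ∞)
    (hk : ∀ t ∈ T, ∀ τ ∈ T, k t τ ≤ c * k' t τ) :
    ∫⁻ τ in T, ∫⁻ t in T, G t τ * k t τ ∂μ ∂μ ≤
      c * ∫⁻ τ in T, ∫⁻ t in T, G t τ * k' t τ ∂μ ∂μ := by
  calc ∫⁻ τ in T, ∫⁻ t in T, G t τ * k t τ ∂μ ∂μ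
      ≤ ∫⁻ τ in T, ∫⁻ t in T, c * (G t τ * k' t τ) ∂μ ∂μ :=
        setLIntegral_mono' hT fun τ hτ => setLIntegral_mono' hT fun t ht => by
          rw [mul_left_comm c]
          gcongr
          exact hk t ht τ hτ
    _ = c * ∫⁻ τ in T, ∫⁻ t in T, G t τ * k' t τ ∂μ ∂μ := by
        simp_rw [lintegral_const_mul' _ _ hc]

theorem setLIntegral_setLIntegral_mul_add_one {F : α → ℝ≥0∞} {k : α → α → ℝ≥0∞}
    [SFinite μ] (hF : Measurable F) (hk : Measurable (Function.uncurry k)) :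
    ∫⁻ τ in T, ∫⁻ t in T, F t * F τ * (k t τ + 1) ∂μ ∂μ =
      ∫⁻ τ in T, ∫⁻ t in T, F t * F τ * k t τ ∂μ ∂μ + (∫⁻ t in T, F t ∂μ) ^ 2 := by
  have hFFk : Measurable fun p : α × α => F p.1 * F p.2 * k p.1 p.2 := by
    have : Measurable fun p : α × α => k p.1 p.2 := hk
    fun_prop
  have hFFk_left (τ : α) : Measurable fun t => F t * F τ * k t τ :=
    hFFk.comp measurable_prodMk_right
  have hFFk_int : Measurable fun τ => ∫⁻ t in T, F t * F τ * k t τ ∂μ :=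
    hFFk.lintegral_prod_left'
  simp_rw [mul_add, mul_one, lintegral_add_left (hFFk_left _), lintegral_add_left hFFk_int,
    lintegral_mul_const _ hF, sq, lintegral_const_mul _ hF]

theorem setLIntegral_setLIntegral_mul_eq_top (hT : MeasurableSet T) {F w : α → ℝ≥0∞}
    {k : α → α → ℝ≥0∞} (hF : Measurable F) (hw : Measurable w)
    (hw0 : ∀ᵐ τ ∂μ.restrict T, w τ ≠ 0) (hk : ∀ t ∈ T, ∀ τ ∈ T, w τ ≤ k t τ)
    (hinf : ∫⁻ t in T, F t ∂μ = ∞) :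
    ∫⁻ τ in T, ∫⁻ t in T, F t * F τ * k t τ ∂μ ∂μ = ∞ := by
  have hFw : ∫⁻ τ in T, F τ * w τ ∂μ ≠ 0 := by
    intro h
    have hF0 : F =ᵐ[μ.restrict T] 0 := by
      filter_upwards [(lintegral_eq_zero_iff (hF.mul hw)).1 h, hw0] with τ hτ hwτ
      simpa [hwτ] using hτ
    simp [lintegral_congr_ae hF0] at hinf
  refine top_le_iff.1 ?_
  calc ∞ = ∫⁻ τ in T, (∫⁻ t in T, F t ∂μ) * (F τ * w τ) ∂μ := by
        rw [lintegral_const_mul _ (by fun_prop : Measurable fun τ => F τ * w τ), hinf,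
          top_mul hFw]
    _ = ∫⁻ τ in T, ∫⁻ t in T, F t * F τ * w τ ∂μ ∂μ := by
        simp_rw [mul_assoc, lintegral_mul_const _ hF]
    _ ≤ ∫⁻ τ in T, ∫⁻ t in T, F t * F τ * k t τ ∂μ ∂μ :=
        setLIntegral_mono' hT fun τ hτ => setLIntegral_mono' hT fun t ht => by
          gcongr; exact hk t ht τ hτ

end DoubleIntegral

theorem lintegral_Ioo_inv_add {s b c : ℝ} (hsb : 0 < s + b) (hbc : b ≤ c) :
    ∫⁻ x in Ioo b c, ENNReal.ofReal (s + x)⁻¹ =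
      ENNReal.ofReal (Real.log (s + c) - Real.log (s + b)) := by
  have hpos : ∀ x ∈ Icc b c, 0 < s + x := fun x hx => by linarith [hx.1]
  have hint : IntegrableOn (fun x : ℝ => (s + x)⁻¹) (Ioo b c) :=
    ((continuousOn_const.add continuousOn_id).inv₀ fun x hx => (hpos x hx).ne').integrableOn_Icc
      |>.mono_set Ioo_subset_Icc_self
  rw [← ofReal_integral_eq_lintegral_ofReal hint, ← integral_Ioc_eq_integral_Ioo,
    ← intervalIntegral.integral_of_le hbc, intervalIntegral.integral_comp_add_left (·⁻¹),
    integral_inv_of_pos hsb (by linarith), Real.log_div (by linarith) hsb.ne']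
  filter_upwards [ae_restrict_mem measurableSet_Ioo] with x hx
  exact inv_nonneg.2 (hpos x (Ioo_subset_Icc_self hx)).le

noncomputable def stieltjesKernel (a t τ : ℝ) : ℝ≥0∞ :=
  ∫⁻ x in Ioo 0 a, ENNReal.ofReal (x / ((t + x) * (τ + x)))

namespace stieltjesKernel

variable {a t τ : ℝ}

theorem le_ofReal_log_sub (ha : 0 ≤ a) (ht : 0 < t) (hτ : 0 < τ) :
    stieltjesKernel a t τ ≤ ENNReal.ofReal (Real.log (t + τ + a) - Real.log (t + τ)) := by
  calc stieltjesKernel a t τ ≤ ∫⁻ x in Ioo 0 a, ENNReal.ofReal (t + τ + x)⁻¹ :=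
        setLIntegral_mono' measurableSet_Ioo fun x hx => ENNReal.ofReal_le_ofReal <| by
          have hx : 0 < x := hx.1
          rw [div_le_iff₀ (by positivity), ← div_eq_inv_mul, le_div_iff₀ (by positivity)]
          nlinarith [mul_pos ht hτ]
    _ = ENNReal.ofReal (Real.log (t + τ + a) - Real.log (t + τ)) := by
        simpa only [add_zero] using lintegral_Ioo_inv_add (s := t + τ) (by positivity) ha

theorem ofReal_one_div_sixteen_le (ht : t ∈ Ioo 0 a) (hτ : τ ∈ Ioo 0 a) :
    ENNReal.ofReal (1 / 16) ≤ stieltjesKernel a t τ := by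
  have ha : 0 < a := ht.1.trans ht.2
  calc ENNReal.ofReal (1 / 16) = ∫⁻ _ in Ioo (a / 2) a, ENNReal.ofReal (1 / (8 * a)) := by
        rw [setLIntegral_const, Real.volume_Ioo, ← ENNReal.ofReal_mul (by positivity)]
        congr 1
        field_simp
        ring
    _ ≤ ∫⁻ x in Ioo (a / 2) a, ENNReal.ofReal (x / ((t + x) * (τ + x))) :=
        setLIntegral_mono' measurableSet_Ioo fun x hx => ENNReal.ofReal_le_ofReal <| by
          rw [div_le_div_iff₀ (by positivity) (by nlinarith [hx.1, ht.1, hτ.1])]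
          nlinarith [hx.1, hx.2, ht.1, ht.2, hτ.1, hτ.2, mul_pos ht.1 hτ.1]
    _ ≤ stieltjesKernel a t τ := lintegral_mono_set (Ioo_subset_Ioo_left (by positivity))

theorem ofReal_half_log_le (ha : 0 ≤ a) (ht : 0 < t) (hτ : 0 < τ) :
    ENNReal.ofReal ((Real.log (t + τ + a) - Real.log (2 * (t + τ))) / 2) ≤
      stieltjesKernel a t τ := by
  have hs : 0 < t + τ := add_pos ht hτ
  set s := t + τ
  rcases lt_or_ge a s with has | has
  · rw [ENNReal.ofReal_of_nonpos]
    · exact bot_le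
    · have := Real.log_le_log (by linarith) (by linarith : s + a ≤ 2 * s)
      linarith
  calc ENNReal.ofReal ((Real.log (s + a) - Real.log (2 * s)) / 2)
      = ENNReal.ofReal 2⁻¹ * ∫⁻ x in Ioo s a, ENNReal.ofReal (s + x)⁻¹ := by
        rw [lintegral_Ioo_inv_add (by positivity) has, ← ENNReal.ofReal_mul (by norm_num),
          two_mul]
        ring_nf
    _ ≤ ∫⁻ x in Ioo s a, ENNReal.ofReal (x / ((t + x) * (τ + x))) := by
        rw [← lintegral_const_mul' _ _ ofReal_ne_top]
        refine setLIntegral_mono' measurableSet_Ioo fun x hx => ?_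
        have hx : s < x := hx.1
        have hx0 : 0 < x := hs.trans hx
        rw [← ENNReal.ofReal_mul (by norm_num)]
        refine ENNReal.ofReal_le_ofReal ?_
        rw [← div_eq_inv_mul, inv_div_left, inv_eq_one_div,
          div_le_div_iff₀ (by linarith) (by positivity)]
        nlinarith [sq_nonneg (t - τ)]
    _ ≤ stieltjesKernel a t τ := lintegral_mono_set (Ioo_subset_Ioo_left (by positivity))

theorem exists_ofReal_abs_log_le_mul (ha : 0 < a) : ∃ C ≠ ∞, ∀ t ∈ Ioo 0 a, ∀ τ ∈ Ioo 0 a,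
    ENNReal.ofReal |Real.log (t + τ)| ≤ C * stieltjesKernel a t τ := by
  set M := |Real.log (2 / a)| + |Real.log (2 * a)| with hM
  refine ⟨2 + ENNReal.ofReal (16 * M), by finiteness, fun t ht τ hτ => ?_⟩
  set s := t + τ
  have hs : 0 < s := add_pos ht.1 hτ.1
  set u := Real.log (s + a) - Real.log (2 * s) with hu
  have hlog : |Real.log s| ≤ max u 0 + M := by
    rcases le_total (Real.log s) 0 with hneg | hpos
    · have : Real.log a ≤ Real.log (s + a) := Real.log_le_log ha (by linarith)
      rw [Real.log_mul two_ne_zero hs.ne'] at hu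
      rw [Real.log_div two_ne_zero ha.ne'] at hM
      rw [abs_of_nonpos hneg]
      linarith [le_max_left u 0, le_abs_self (Real.log 2 - Real.log a),
        abs_nonneg (Real.log (2 * a))]
    · have : Real.log s ≤ Real.log (2 * a) := Real.log_le_log hs (by linarith [ht.2, hτ.2])
      rw [abs_of_nonneg hpos]
      linarith [le_max_right u 0, le_abs_self (Real.log (2 * a)), abs_nonneg (Real.log (2 / a))]
  calc ENNReal.ofReal |Real.log s| ≤ ENNReal.ofReal (max u 0) + ENNReal.ofReal M :=
        (ENNReal.ofReal_le_ofReal hlog).trans ENNReal.ofReal_add_le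
    _ = 2 * ENNReal.ofReal (u / 2) + ENNReal.ofReal (16 * M) * ENNReal.ofReal (1 / 16) := by
        rw [← ENNReal.ofReal_mul (by positivity), ENNReal.ofReal_max, ENNReal.ofReal_zero,
          max_eq_left zero_le, ← ENNReal.ofReal_ofNat 2, ← ENNReal.ofReal_mul zero_le_two]
        congr 2 <;> ring
    _ ≤ 2 * stieltjesKernel a t τ + ENNReal.ofReal (16 * M) * stieltjesKernel a t τ := by
        gcongr
        · exact ofReal_half_log_le ha.le ht.1 hτ.1
        · exact ofReal_one_div_sixteen_le ht hτ
    _ = (2 + ENNReal.ofReal (16 * M)) * stieltjesKernel a t τ := (add_mul _ _ _).symm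

theorem exists_le_mul_ofReal_abs_log_add_one (ha : 0 < a) :
    ∃ C ≠ ∞, ∀ t ∈ Ioo 0 a, ∀ τ ∈ Ioo 0 a,
      stieltjesKernel a t τ ≤ C * (ENNReal.ofReal |Real.log (t + τ)| + 1) := by
  set c := ENNReal.ofReal |Real.log (3 * a)|
  refine ⟨c + 1, by finiteness, fun t ht τ hτ => ?_⟩
  set s := t + τ
  have hs : 0 < s := add_pos ht.1 hτ.1
  have hlog : Real.log (s + a) - Real.log s ≤ |Real.log (3 * a)| + |Real.log s| := by
    have : Real.log (s + a) ≤ Real.log (3 * a) :=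
      Real.log_le_log (by linarith) (by linarith [ht.2, hτ.2])
    linarith [le_abs_self (Real.log (3 * a)), neg_abs_le (Real.log s)]
  calc stieltjesKernel a t τ ≤ ENNReal.ofReal (Real.log (s + a) - Real.log s) :=
        le_ofReal_log_sub ha.le ht.1 hτ.1
    _ ≤ c + ENNReal.ofReal |Real.log s| :=
        (ENNReal.ofReal_le_ofReal hlog).trans ENNReal.ofReal_add_le
    _ ≤ c * (ENNReal.ofReal |Real.log s| + 1) + 1 * (ENNReal.ofReal |Real.log s| + 1) := by
        gcongr
        · exact le_mul_of_one_le_right' le_add_self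
        · rw [one_mul]; exact le_self_add
    _ = (c + 1) * (ENNReal.ofReal |Real.log s| + 1) := (add_mul _ _ _).symm

end stieltjesKernel

theorem setLIntegral_setLIntegral_mul_ofReal_abs_log_eq_top {a : ℝ} {F : ℝ → ℝ≥0∞}
    (hF : Measurable F) (hinf : ∫⁻ t in Ioo 0 a, F t = ∞) :
    ∫⁻ τ in Ioo 0 a, ∫⁻ t in Ioo 0 a, F t * F τ * ENNReal.ofReal |Real.log (t + τ)| = ∞ := by
  have hw : Measurable fun τ : ℝ => ENNReal.ofReal |Real.log (τ + 1 / 2)| := by fun_prop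
  have hw0 : ∀ᵐ τ ∂volume.restrict (Ioo 0 a), ENNReal.ofReal |Real.log (τ + 1 / 2)| ≠ 0 := by
    filter_upwards [ae_restrict_mem measurableSet_Ioo,
      ae_restrict_of_ae (measure_eq_zero_iff_ae_notMem.1 (measure_singleton (1 / 2 : ℝ)))]
      with τ hτ hne
    have : τ + 1 / 2 ≠ 1 := fun h => hne (by simp only [mem_singleton_iff]; linarith)
    simpa using Real.log_ne_zero_of_pos_of_ne_one (by linarith [hτ.1]) this
  have of_subset {T : Set ℝ} (hTS : T ⊆ Ioo 0 a) (hT : MeasurableSet T)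
      (hlog : ∀ t ∈ T, ∀ τ ∈ T, |Real.log (τ + 1 / 2)| ≤ |Real.log (t + τ)|)
      (hinf : ∫⁻ t in T, F t = ∞) :
      ∫⁻ τ in Ioo 0 a, ∫⁻ t in Ioo 0 a, F t * F τ * ENNReal.ofReal |Real.log (t + τ)| = ∞ :=
    top_le_iff.1 <| (setLIntegral_setLIntegral_mul_eq_top hT hF hw
      (ae_restrict_of_ae_restrict_of_subset hTS hw0)
      (fun t ht τ hτ => ENNReal.ofReal_le_ofReal (hlog t ht τ hτ)) hinf).symm.trans_le
      (setLIntegral_setLIntegral_mono_set hTS)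
  rw [← lintegral_inter_add_sdiff _ _ (measurableSet_Iio (a := (1 / 2 : ℝ))),
    ENNReal.add_eq_top] at hinf
  rcases hinf with hinf | hinf
  · refine of_subset inter_subset_left (measurableSet_Ioo.inter measurableSet_Iio)
      (fun t ht τ hτ => ?_) hinf
    have h1 : t + τ ≤ τ + 1 / 2 := by linarith [ht.2.out]
    have h2 : τ + 1 / 2 ≤ 1 := by linarith [hτ.2.out]
    rw [abs_of_nonpos (Real.log_nonpos (by linarith [hτ.1.1]) h2),
      abs_of_nonpos (Real.log_nonpos (by linarith [ht.1.1, hτ.1.1]) (h1.trans h2)), neg_le_neg_iff]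
    exact Real.log_le_log (by linarith [ht.1.1, hτ.1.1]) h1
  · refine of_subset sdiff_subset (measurableSet_Ioo.diff measurableSet_Iio)
      (fun t ht τ hτ => ?_) hinf
    have ht2 : ¬t < 1 / 2 := ht.2
    have hτ2 : ¬τ < 1 / 2 := hτ.2
    have h1 : τ + 1 / 2 ≤ t + τ := by linarith [not_lt.1 ht2]
    have h2 : 1 ≤ τ + 1 / 2 := by linarith [not_lt.1 hτ2]
    rw [abs_of_nonneg (Real.log_nonneg h2), abs_of_nonneg (Real.log_nonneg (h2.trans h1))]
    exact Real.log_le_log (by linarith) h1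

section StieltjesTransform

variable {a : ℝ} {ν : ℝ → ℝ}

theorem lintegral_sq_stieltjes_mul_eq (hν : Measurable ν) (hν0 : ∀ t ∈ Ioo 0 a, 0 ≤ ν t) :
    ∫⁻ x in Ioo 0 a,
        (∫⁻ t in Ioo 0 a, ENNReal.ofReal (ν t / (Real.sqrt t * (t + x)))) ^ 2 * ENNReal.ofReal x =
      ∫⁻ τ in Ioo 0 a, ∫⁻ t in Ioo 0 a, ENNReal.ofReal (ν t / Real.sqrt t) *
        ENNReal.ofReal (ν τ / Real.sqrt τ) * stieltjesKernel a t τ := by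
  rw [lintegral_sq_mul_eq_lintegral_lintegral_lintegral (by fun_prop) (by fun_prop)]
  refine setLIntegral_congr_fun measurableSet_Ioo fun τ hτ => ?_
  refine setLIntegral_congr_fun measurableSet_Ioo fun t ht => ?_
  rw [stieltjesKernel, ← lintegral_const_mul' _ _ (by finiteness)]
  refine setLIntegral_congr_fun measurableSet_Ioo fun x hx => ?_
  have := ht.1; have := hτ.1; have := hx.1; have := hν0 t ht; have := hν0 τ hτ
  rw [← ENNReal.ofReal_mul (by positivity), ← ENNReal.ofReal_mul (by positivity),
    ← ENNReal.ofReal_mul (by positivity), ← ENNReal.ofReal_mul (by positivity)]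
  congr 1
  field_simp

theorem ofReal_mul_abs_log_div_sqrt {t τ : ℝ} (ht : 0 ≤ t) (hνt : 0 ≤ ν t) (hντ : 0 ≤ ν τ) :
    ENNReal.ofReal (ν t * ν τ * |Real.log (t + τ)| / Real.sqrt (t * τ)) =
      ENNReal.ofReal (ν t / Real.sqrt t) * ENNReal.ofReal (ν τ / Real.sqrt τ) *
        ENNReal.ofReal |Real.log (t + τ)| := by
  rw [← ENNReal.ofReal_mul (by positivity), ← ENNReal.ofReal_mul (by positivity),
    Real.sqrt_mul ht]
  congr 1
  ring

end StieltjesTransform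

theorem stmt_10 (a : ℝ) (ha : 0 < a) (ν : ℝ → ℝ) (hν_meas : Measurable ν)
    (hν_nonneg : ∀ t ∈ Set.Ioo 0 a, 0 ≤ ν t) :
    (∫⁻ x in Set.Ioo 0 a,
        (∫⁻ t in Set.Ioo 0 a, ENNReal.ofReal (ν t / (Real.sqrt t * (t + x)))) ^ 2 *
          ENNReal.ofReal x) < ⊤ ↔
    (∫⁻ τ in Set.Ioo 0 a, ∫⁻ t in Set.Ioo 0 a,
        ENNReal.ofReal (ν t * ν τ * |Real.log (t + τ)| / Real.sqrt (t * τ))) < ⊤ := by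
  set F : ℝ → ℝ≥0∞ := fun t => ENNReal.ofReal (ν t / Real.sqrt t)
  have hF : Measurable F := by fun_prop
  rw [lintegral_sq_stieltjes_mul_eq hν_meas hν_nonneg,
    setLIntegral_congr_fun measurableSet_Ioo fun τ hτ =>
      setLIntegral_congr_fun measurableSet_Ioo fun t ht =>
        ofReal_mul_abs_log_div_sqrt ht.1.le (hν_nonneg t ht) (hν_nonneg τ hτ)]
  obtain ⟨C₁, hC₁, hlog_le⟩ := stieltjesKernel.exists_ofReal_abs_log_le_mul ha
  obtain ⟨C₂, hC₂, hle_log⟩ := stieltjesKernel.exists_le_mul_ofReal_abs_log_add_one ha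
  constructor
  · intro hP
    exact (setLIntegral_setLIntegral_mul_le_const_mul measurableSet_Ioo hC₁ hlog_le).trans_lt
      (mul_lt_top hC₁.lt_top hP)
  · intro hQ
    have hFfin : ∫⁻ t in Ioo 0 a, F t ≠ ∞ := fun h =>
      hQ.ne (setLIntegral_setLIntegral_mul_ofReal_abs_log_eq_top hF h)
    refine (setLIntegral_setLIntegral_mul_le_const_mul measurableSet_Ioo hC₂ hle_log).trans_lt ?_
    rw [setLIntegral_setLIntegral_mul_add_one hF (by fun_prop)]
    exact mul_lt_top hC₂.lt_top (add_lt_top.2 ⟨hQ, pow_lt_top hFfin.lt_top⟩)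
end

section
/- For t, τ ∈ (0, a) with a < 1/2, the integral ∫₀^a x/((t+x)(τ+x)) dx is bounded above and below by positive constant multiples (depending only on a) of |log(t+τ)| + 1. -/
/-! With `s = t + τ`, the integrand is squeezed between `x / (s + x) ^ 2` and `1 / (s + x)`, whose
integrals over `(0, a)` are `log ((s + a) / s) - a / (s + a)` and `log ((s + a) / s)`; since
`s < 2a < 1`, both are `|log s|` up to an additive constant depending on `a`. The additive
constant in the lower bound is absorbed using the uniform bound `∫ ≥ 1/8`, which comes from
`(t + x)(τ + x) ≤ (2a)²`. -/

open MeasureTheory Real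

theorem integral_inv_const_add {s a : ℝ} (hs : 0 < s) (ha : 0 ≤ a) :
    ∫ x in (0 : ℝ)..a, (s + x)⁻¹ = log (s + a) - log s := by
  rw [intervalIntegral.integral_comp_add_left (fun x => x⁻¹), add_zero,
    integral_inv_of_pos hs (by linarith), log_div (by linarith) hs.ne']

theorem intervalIntegrable_div_const_add_sq {s a : ℝ} (hs : 0 < s) (ha : 0 ≤ a) :
    IntervalIntegrable (fun x => x / (s + x) ^ 2) volume 0 a :=
  (continuousOn_id.div (by fun_prop) fun x hx => by
    rw [Set.uIcc_of_le ha] at hx; nlinarith [hx.1]).intervalIntegrable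

theorem integral_div_const_add_sq {s a : ℝ} (hs : 0 < s) (ha : 0 ≤ a) :
    ∫ x in (0 : ℝ)..a, x / (s + x) ^ 2 = log (s + a) - log s - a / (s + a) := by
  have hderiv : ∀ x ∈ Set.uIcc 0 a,
      HasDerivAt (fun y => log (s + y) + s / (s + y)) (x / (s + x) ^ 2) x := by
    intro x hx
    rw [Set.uIcc_of_le ha] at hx
    have hsx : s + x ≠ 0 := by linarith [hx.1]
    have hlin : HasDerivAt (fun y => s + y) 1 x := (hasDerivAt_id x).const_add s
    refine ((hlin.log hsx).add ((hasDerivAt_const x s).div hlin hsx)).congr_deriv ?_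
    field_simp
    ring
  rw [intervalIntegral.integral_eq_sub_of_hasDerivAt hderiv
    (intervalIntegrable_div_const_add_sq hs ha), add_zero]
  field_simp
  ring

section Kernel

variable {t τ x : ℝ}

theorem div_add_mul_add_le_inv (ht : 0 < t) (hτ : 0 < τ) (hx : 0 ≤ x) :
    x / ((t + x) * (τ + x)) ≤ (t + τ + x)⁻¹ := by
  rw [inv_eq_one_div, div_le_div_iff₀ (by positivity) (by positivity)]
  nlinarith [mul_pos ht hτ]

theorem div_sq_le_div_add_mul_add (ht : 0 < t) (hτ : 0 < τ) (hx : 0 ≤ x) :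
    x / (t + τ + x) ^ 2 ≤ x / ((t + x) * (τ + x)) :=
  div_le_div_of_nonneg_left hx (by positivity) (by nlinarith [mul_pos ht hτ])

variable {a : ℝ}

theorem intervalIntegrable_div_add_mul_add (ht : 0 < t) (hτ : 0 < τ) (ha : 0 ≤ a) :
    IntervalIntegrable (fun x => x / ((t + x) * (τ + x))) volume 0 a :=
  (continuousOn_id.div (by fun_prop) fun x hx => by
    rw [Set.uIcc_of_le ha] at hx; nlinarith [hx.1]).intervalIntegrable

theorem integral_div_add_mul_add_le (ht : 0 < t) (hτ : 0 < τ) (ha : 0 ≤ a) :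
    ∫ x in (0 : ℝ)..a, x / ((t + x) * (τ + x)) ≤ log (t + τ + a) - log (t + τ) := by
  rw [← integral_inv_const_add (by positivity) ha]
  refine intervalIntegral.integral_mono_on ha (intervalIntegrable_div_add_mul_add ht hτ ha) ?_
    fun x hx => div_add_mul_add_le_inv ht hτ hx.1
  exact (ContinuousOn.inv₀ (f := fun x => t + τ + x) (by fun_prop) fun x hx => by
    rw [Set.uIcc_of_le ha] at hx; nlinarith [hx.1]).intervalIntegrable

theorem le_integral_div_add_mul_add (ht : 0 < t) (hτ : 0 < τ) (ha : 0 ≤ a) :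
    log (t + τ + a) - log (t + τ) - a / (t + τ + a) ≤
      ∫ x in (0 : ℝ)..a, x / ((t + x) * (τ + x)) := by
  rw [← integral_div_const_add_sq (by positivity) ha]
  exact intervalIntegral.integral_mono_on ha
    (intervalIntegrable_div_const_add_sq (by positivity) ha)
    (intervalIntegrable_div_add_mul_add ht hτ ha) fun x hx => div_sq_le_div_add_mul_add ht hτ hx.1

theorem one_div_eight_le_integral_div_add_mul_add (ht : 0 < t) (hτ : 0 < τ) (ha : 0 < a)
    (hta : t ≤ a) (hτa : τ ≤ a) :
    1 / 8 ≤ ∫ x in (0 : ℝ)..a, x / ((t + x) * (τ + x)) := by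
  have hmean : ∫ x in (0 : ℝ)..a, x / (2 * a) ^ 2 = 1 / 8 := by
    rw [intervalIntegral.integral_div, integral_id]
    field_simp
    ring
  rw [← hmean]
  refine intervalIntegral.integral_mono_on ha.le
    ((continuous_id.div_const _).intervalIntegrable _ _)
    (intervalIntegrable_div_add_mul_add ht hτ ha.le) fun x hx => ?_
  exact div_le_div_of_nonneg_left hx.1 (mul_pos (by linarith [hx.1]) (by linarith [hx.1]))
    (by nlinarith [hx.1, hx.2, mul_le_mul hta hτa hτ.le ha.le])

end Kernel

-- With `c = δ / (δ + K + 1)`, `c * (L + 1) = c * (L - K) + (1 - c) * δ` is a convex combination.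
theorem mul_add_one_le_of_le_of_sub_le {δ K L I : ℝ} (hδ : 0 < δ) (hK : 0 ≤ K)
    (h₁ : δ ≤ I) (h₂ : L - K ≤ I) : δ / (δ + K + 1) * (L + 1) ≤ I := by
  rw [div_mul_eq_mul_div, div_le_iff₀ (by positivity)]
  nlinarith [mul_le_mul_of_nonneg_left h₂ hδ.le,
    mul_le_mul_of_nonneg_left h₁ (by linarith : 0 ≤ K + 1)]

theorem stmt_11 (a : ℝ) (ha : 0 < a) (ha' : a < 1 / 2) :
    ∃ c₁ c₂ : ℝ, 0 < c₁ ∧ 0 < c₂ ∧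
      ∀ t ∈ Set.Ioo 0 a, ∀ τ ∈ Set.Ioo 0 a,
        c₁ * (|Real.log (t + τ)| + 1) ≤ (∫ x in Set.Ioo 0 a, x / ((t + x) * (τ + x))) ∧
        (∫ x in Set.Ioo 0 a, x / ((t + x) * (τ + x))) ≤ c₂ * (|Real.log (t + τ)| + 1) := by
  have hloga : log a < 0 := log_neg ha (by linarith)
  refine ⟨1 / 8 / (1 / 8 + (1 - log a) + 1), 1, div_pos (by norm_num) (by linarith), one_pos,
    ?_⟩
  rintro t ⟨ht, hta⟩ τ ⟨hτ, hτa⟩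
  rw [← integral_Ioc_eq_integral_Ioo, ← intervalIntegral.integral_of_le ha.le]
  have habs : |log (t + τ)| = -log (t + τ) := abs_of_neg (log_neg (by linarith) (by linarith))
  rw [habs]
  constructor
  · refine mul_add_one_le_of_le_of_sub_le (by norm_num) (by linarith)
      (one_div_eight_le_integral_div_add_mul_add ht hτ ha hta.le hτa.le)
      (le_trans ?_ (le_integral_div_add_mul_add ht hτ ha.le))
    have hlog : log a ≤ log (t + τ + a) := log_le_log ha (by linarith)
    have hfrac : a / (t + τ + a) ≤ 1 := (div_le_one (by linarith)).2 (by linarith)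
    linarith
  · have hlog : log (t + τ + a) ≤ 1 := by
      linarith [log_le_sub_one_of_pos (by linarith : 0 < t + τ + a)]
    linarith [integral_div_add_mul_add_le ht hτ ha.le]
end

section
/- Sharpness of the extremal bound: for 0 < a < b, λ = (b² − a²)/(2ab), and every ε > 0, there exists a nonnegative function v ∈ L²(0,∞) supported in (0, δ) for small δ > 0 with (2/π)∫₀^∞ t v(t)/sqrt((b² − t²)(a² − t²)) dt = 1 and such that for all x ∈ [a,b], (1/π)∫₀^∞ v(t)·(2t/(x² − t²))·(1/sqrt((b² − t²)(a² − t²))) dt·sqrt((b² − x²)(x² − a²)) ≤ λ + ε. -/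
/-!
Take `v = c · 𝟙_(0,δ)`, with `c` fixed by the normalisation. For `t < δ < a ≤ x` the kernel
satisfies `2t/(x² - t²) ≤ 2a²/((a² - δ²)x²) · t`, so the normalisation bounds the kernel integral by
`π a²/((a² - δ²)x²)`. The identity `(b² - a²)x² = a²(b² - x²) + b²(x² - a²)` and AM-GM give
`√((b² - x²)(x² - a²)) ≤ λ x²`, so the left-hand side is at most `a²λ/(a² - δ²)`, which tends to `λ`
as `δ → 0`.
-/

open MeasureTheory Set

lemma setIntegral_indicator_const_mul {α : Type*} [MeasurableSpace α] {μ : Measure α}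
    {s u : Set α} (hs : MeasurableSet s) (hsu : s ⊆ u) (c : ℝ) (f : α → ℝ) :
    ∫ t in u, s.indicator (fun _ => c) t * f t ∂μ = c * ∫ t in s, f t ∂μ := by
  simp_rw [← indicator_mul_left]
  rw [setIntegral_indicator hs, inter_eq_self_of_subset_right hsu, integral_const_mul]

lemma sqrt_mul_sub_sq_le_mul_sq {a b : ℝ} (ha : 0 < a) (hab : a ≤ b) (x : ℝ) :
    √((b ^ 2 - x ^ 2) * (x ^ 2 - a ^ 2)) ≤ (b ^ 2 - a ^ 2) / (2 * a * b) * x ^ 2 := by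
  have hb : 0 < b := ha.trans_le hab
  have hab2 : a ^ 2 ≤ b ^ 2 := by gcongr
  refine Real.sqrt_le_iff.2 ⟨by positivity, ?_⟩
  rw [div_mul_eq_mul_div, div_pow, le_div_iff₀ (by positivity)]
  nlinarith [sq_nonneg (a ^ 2 * (b ^ 2 - x ^ 2) - b ^ 2 * (x ^ 2 - a ^ 2))]

lemma exists_pos_lt_mul_div_sub_sq_le {a L ε : ℝ} (ha : 0 < a) (hL : 0 < L) (hε : 0 < ε) :
    ∃ δ, 0 < δ ∧ δ < a ∧ a ^ 2 * L / (a ^ 2 - δ ^ 2) ≤ L + ε := by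
  have hr : 0 < ε / (L + ε) := by positivity
  have hr1 : ε / (L + ε) < 1 := (div_lt_one (by positivity)).2 (by linarith)
  refine ⟨a * √(ε / (L + ε)), by positivity, ?_, le_of_eq ?_⟩
  · exact mul_lt_of_lt_one_right ha ((Real.sqrt_lt_sqrt hr.le hr1).trans_eq Real.sqrt_one)
  · have hsub : a ^ 2 - a ^ 2 * (ε / (L + ε)) = a ^ 2 * L / (L + ε) := by field_simp; ring
    rw [mul_pow, Real.sq_sqrt hr.le, hsub]
    field_simp

lemma sqrt_weight_pos {a b t : ℝ} (hab : a ≤ b) (ht : 0 ≤ t) (hta : t < a) :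
    0 < √((b ^ 2 - t ^ 2) * (a ^ 2 - t ^ 2)) := by
  have hta2 : t ^ 2 < a ^ 2 := by gcongr
  have hab2 : a ^ 2 ≤ b ^ 2 := by gcongr; linarith
  exact Real.sqrt_pos.2 (mul_pos (by linarith) (by linarith))

lemma continuousOn_div_sqrt_weight {a b δ : ℝ} (hab : a ≤ b) (hδa : δ < a) :
    ContinuousOn (fun t => t / √((b ^ 2 - t ^ 2) * (a ^ 2 - t ^ 2))) (Icc 0 δ) :=
  continuousOn_id.div (by fun_prop) fun t ht =>
    (sqrt_weight_pos hab ht.1 (ht.2.trans_lt hδa)).ne'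

lemma integrableOn_div_sqrt_weight {a b δ : ℝ} (hab : a ≤ b) (hδa : δ < a) :
    IntegrableOn (fun t => t / √((b ^ 2 - t ^ 2) * (a ^ 2 - t ^ 2))) (Ioo 0 δ) :=
  (continuousOn_div_sqrt_weight hab hδa).integrableOn_Icc.mono_set Ioo_subset_Icc_self

lemma integral_div_sqrt_weight_pos {a b δ : ℝ} (hab : a ≤ b) (hδ : 0 < δ) (hδa : δ < a) :
    0 < ∫ t in Ioo 0 δ, t / √((b ^ 2 - t ^ 2) * (a ^ 2 - t ^ 2)) := by
  rw [← integral_Ioc_eq_integral_Ioo, ← intervalIntegral.integral_of_le hδ.le]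
  refine intervalIntegral.intervalIntegral_pos_of_pos_on ?_ (fun t ht => ?_) hδ
  · exact (continuousOn_div_sqrt_weight hab hδa).intervalIntegrable_of_Icc hδ.le
  · exact div_pos ht.1 (sqrt_weight_pos hab ht.1.le (ht.2.trans hδa))

lemma one_div_sq_sub_sq_le {a δ t x : ℝ} (ht : t ^ 2 ≤ δ ^ 2)
    (hδa : δ ^ 2 < a ^ 2) (hax : a ^ 2 ≤ x ^ 2) :
    1 / (x ^ 2 - t ^ 2) ≤ a ^ 2 / ((a ^ 2 - δ ^ 2) * x ^ 2) := by
  have hx : 0 < x ^ 2 := ((sq_nonneg δ).trans_lt hδa).trans_le hax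
  rw [div_le_div_iff₀ (by nlinarith) (by nlinarith)]
  nlinarith

lemma integral_kernel_le {a b δ x : ℝ} (ha : 0 < a) (hab : a ≤ b) (hδa : δ < a) (hax : a ≤ x) :
    ∫ t in Ioo 0 δ, 2 * t / (x ^ 2 - t ^ 2) * (1 / √((b ^ 2 - t ^ 2) * (a ^ 2 - t ^ 2))) ≤
      2 * a ^ 2 / ((a ^ 2 - δ ^ 2) * x ^ 2) *
        ∫ t in Ioo 0 δ, t / √((b ^ 2 - t ^ 2) * (a ^ 2 - t ^ 2)) := by
  rw [← integral_const_mul]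
  refine integral_mono_of_nonneg ?_ ((integrableOn_div_sqrt_weight hab hδa).const_mul _) ?_
    <;> filter_upwards [ae_restrict_mem measurableSet_Ioo] with t ⟨ht0, htδ⟩
  all_goals
    have hw := sqrt_weight_pos (b := b) hab ht0.le (htδ.trans hδa)
    have htx : t ^ 2 < x ^ 2 := by gcongr; exact htδ.trans (hδa.trans_le hax)
  · have : 0 < x ^ 2 - t ^ 2 := by linarith
    positivity
  · have hk := one_div_sq_sub_sq_le (x := x) (pow_le_pow_left₀ ht0.le htδ.le 2)
      (pow_lt_pow_left₀ hδa (ht0.trans htδ).le two_ne_zero) (by gcongr)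
    calc 2 * t / (x ^ 2 - t ^ 2) * (1 / √((b ^ 2 - t ^ 2) * (a ^ 2 - t ^ 2)))
        = 2 * t / √((b ^ 2 - t ^ 2) * (a ^ 2 - t ^ 2)) * (1 / (x ^ 2 - t ^ 2)) := by ring
      _ ≤ 2 * t / √((b ^ 2 - t ^ 2) * (a ^ 2 - t ^ 2)) * (a ^ 2 / ((a ^ 2 - δ ^ 2) * x ^ 2)) := by
        gcongr
      _ = _ := by ring

theorem stmt_19 (a b : ℝ) (ha : 0 < a) (hab : a < b) (ε : ℝ) (hε : 0 < ε) :
    ∃ (δ : ℝ) (v : ℝ → ℝ), 0 < δ ∧ δ < a ∧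
      (∀ t, 0 ≤ v t) ∧
      MemLp v 2 (volume.restrict (Set.Ioi (0:ℝ))) ∧
      (∀ t, t ∉ Set.Ioo 0 δ → v t = 0) ∧
      (2 / Real.pi) *
          (∫ t in Set.Ioi (0:ℝ),
            t * v t / Real.sqrt ((b ^ 2 - t ^ 2) * (a ^ 2 - t ^ 2))) = 1 ∧
      ∀ x ∈ Set.Icc a b,
        (1 / Real.pi) *
            (∫ t in Set.Ioi (0:ℝ),
              v t * (2 * t / (x ^ 2 - t ^ 2)) *
                (1 / Real.sqrt ((b ^ 2 - t ^ 2) * (a ^ 2 - t ^ 2)))) *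
          Real.sqrt ((b ^ 2 - x ^ 2) * (x ^ 2 - a ^ 2)) ≤
        (b ^ 2 - a ^ 2) / (2 * a * b) + ε := by
  set L := (b ^ 2 - a ^ 2) / (2 * a * b)
  have hL : 0 < L := div_pos (by nlinarith) (by nlinarith)
  obtain ⟨δ, hδ, hδa, hδL⟩ := exists_pos_lt_mul_div_sub_sq_le ha hL hε
  set I := ∫ t in Ioo 0 δ, t / √((b ^ 2 - t ^ 2) * (a ^ 2 - t ^ 2)) with hI_def
  have hI : 0 < I := integral_div_sqrt_weight_pos hab.le hδ hδa
  set c := Real.pi / (2 * I)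
  refine ⟨δ, (Ioo 0 δ).indicator fun _ => c, hδ, hδa,
    indicator_nonneg fun _ _ => by positivity,
    (memLp_indicator_const 2 measurableSet_Ioo c (.inr (by simp))).restrict _,
    fun t ht => indicator_of_notMem ht _, ?_, fun x hx => ?_⟩
  · simp_rw [mul_comm _ ((Ioo 0 δ).indicator _ _), mul_div_assoc,
      setIntegral_indicator_const_mul measurableSet_Ioo Ioo_subset_Ioi_self, ← hI_def]
    simp only [c]
    field_simp
  · simp_rw [mul_assoc ((Ioo 0 δ).indicator _ _),
      setIntegral_indicator_const_mul measurableSet_Ioo Ioo_subset_Ioi_self]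
    calc 1 / Real.pi * (c * _) * √((b ^ 2 - x ^ 2) * (x ^ 2 - a ^ 2))
        ≤ 1 / Real.pi * (c * (2 * a ^ 2 / ((a ^ 2 - δ ^ 2) * x ^ 2) * I)) *
            (L * x ^ 2) := by
          have hK : 0 < 2 * a ^ 2 / ((a ^ 2 - δ ^ 2) * x ^ 2) :=
            div_pos (by positivity) (mul_pos (by nlinarith) (by nlinarith [hx.1]))
          have hc : 0 < c := div_pos Real.pi_pos (by linarith)
          gcongr
          · exact integral_kernel_le ha hab.le hδa hx.1
          · exact sqrt_mul_sub_sq_le_mul_sq ha hab.le x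
      _ = a ^ 2 * L / (a ^ 2 - δ ^ 2) := by
          have : x ≠ 0 := (ha.trans_le hx.1).ne'
          simp only [c]
          field_simp
      _ ≤ L + ε := hδL
end
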